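/- Let φ ∈ C_c^∞(ℝ³;ℝ³) with div φ = 0, χ the standard cut-off (χ=0 on B(0,3/2), χ=1 outside B(0,2)), h ∈ ℝ³, ε > 0, and define φ̃_ε(y) = φ(h + εy) · ∇χ(y) on the annulus Ω₁ = B(0,2)\B(0,3/2). Then ∫_{Ω₁} φ̃_ε(y) dy = 0. -/

import Mathlib

open MeasureTheory Metric

abbrev E3 := EuclideanSpace ℝ (Fin 3)

theorem cutoff_mean_zero (χ : E3 → ℝ) (hχ : ContDiff ℝ (⊤ : ℕ∞) χ)
    (hrange : ∀ x, χ x ∈ Set.Icc (0:ℝ) 1)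
    (hzero : ∀ x ∈ ball (0 : E3) (3/2), χ x = 0)
    (hone : ∀ x ∉ ball (0 : E3) 2, χ x = 1)
    (φ : E3 → E3) (hφ : ContDiff ℝ (⊤ : ℕ∞) φ) (hφs : HasCompactSupport φ)
    (hdiv : ∀ x, ∑ i, fderiv ℝ φ x (EuclideanSpace.single i 1) i = 0)
    (h : E3) (ε : ℝ) (hε : 0 < ε) :
    (∫ y in ball (0 : E3) 2 \ ball (0 : E3) (3/2),
        fderiv ℝ χ y (φ (h + ε • y))) = 0 := by
  classical
  set a : E3 → E3 := fun y => h + ε • y with ha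
  set ψ : E3 → E3 := fun y => φ (a y) with hψdef
  have hχd : Differentiable ℝ χ := hχ.differentiable (by simp)
  have hφd : Differentiable ℝ φ := hφ.differentiable (by simp)
  -- a is smooth with derivative ε • id
  have haD : ∀ y : E3, HasFDerivAt a (ε • ContinuousLinearMap.id ℝ E3) y := by
    intro y
    exact ((hasFDerivAt_id (𝕜 := ℝ) y).const_smul ε).const_add h
  have hψD : ∀ y : E3, HasFDerivAt ψ (ε • fderiv ℝ φ (a y)) y := by
    intro y
    have := ((hφd (a y)).hasFDerivAt).comp y (haD y)
    have e : (fderiv ℝ φ (a y)).comp (ε • ContinuousLinearMap.id ℝ E3) = ε • fderiv ℝ φ (a y) := by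
      ext v; simp
    rw [e] at this; exact this
  have haC : ContDiff ℝ (⊤ : ℕ∞) a := contDiff_const.add (contDiff_id.const_smul ε)
  have hψC : ContDiff ℝ (⊤ : ℕ∞) ψ := hφ.comp haC
  -- ψ has compact support
  have hψs : HasCompactSupport ψ := by
    have e : E3 ≃ₜ E3 :=
      (Homeomorph.smulOfNeZero ε hε.ne').trans (Homeomorph.addLeft h)
    exact hφs.comp_isClosedEmbedding
      (((Homeomorph.smulOfNeZero ε hε.ne').trans
        (Homeomorph.addLeft h)).isClosedEmbedding)
  -- components
  have hψiC : ∀ i : Fin 3, ContDiff ℝ (⊤ : ℕ∞) (fun y => ψ y i) := fun i =>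
    (EuclideanSpace.proj (𝕜 := ℝ) (ι := Fin 3) i).contDiff.comp hψC
  have hψiD : ∀ (i : Fin 3) (y : E3),
      HasFDerivAt (fun y => ψ y i)
        ((EuclideanSpace.proj (𝕜 := ℝ) (ι := Fin 3) i).comp
          (ε • fderiv ℝ φ (a y))) y := fun i y =>
    ((EuclideanSpace.proj (𝕜 := ℝ) (ι := Fin 3) i).hasFDerivAt).comp y (hψD y)
  have hψis : ∀ i : Fin 3, HasCompactSupport (fun y => ψ y i) := fun i =>
    hψs.comp_left (g := fun v : E3 => v i) rfl
  have hfψi : ∀ (i : Fin 3) (y : E3),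
      fderiv ℝ (fun y => ψ y i) y = (EuclideanSpace.proj (𝕜 := ℝ) (ι := Fin 3) i).comp
        (ε • fderiv ℝ φ (a y)) := fun i y => (hψiD i y).fderiv
  set F : E3 → ℝ := fun y => fderiv ℝ χ y (ψ y) with hF
  -- step 1 : the set integral equals the full integral
  have hχc1 : ∀ y : E3, y ∈ ball (0:E3) (3/2) → fderiv ℝ χ y = 0 := by
    intro y hy
    have : χ =ᶠ[nhds y] fun _ => (0:ℝ) :=
      Filter.eventually_of_mem (isOpen_ball.mem_nhds hy) hzero
    rw [this.fderiv_eq]; exact fderiv_const_apply 0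
  have hχc2 : ∀ y : E3, 2 < ‖y‖ → fderiv ℝ χ y = 0 := by
    intro y hy
    have hopen : IsOpen {z : E3 | 2 < ‖z‖} := by
      have : Continuous fun z : E3 => ‖z‖ := continuous_norm
      exact isOpen_lt continuous_const this
    have : χ =ᶠ[nhds y] fun _ => (1:ℝ) := by
      refine Filter.eventually_of_mem (hopen.mem_nhds hy) ?_
      intro z hz
      exact hone z (by simpa [mem_ball, dist_eq_norm] using not_lt.2 hz.le)
    rw [this.fderiv_eq]; exact fderiv_const_apply 1
  have step1 : (∫ y in ball (0 : E3) 2 \ ball (0 : E3) (3/2), F y) = ∫ y, F y := by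
    apply setIntegral_eq_integral_of_ae_compl_eq_zero
    have hsph : (volume : Measure E3) (sphere (0:E3) 2) = 0 :=
      Measure.addHaar_sphere (μ := (volume : Measure E3)) 0 2
    filter_upwards [measure_eq_zero_iff_ae_notMem.1 hsph] with y hy hyc
    rcases not_and_or.1 hyc with hy2 | hy32
    · -- y not in ball 2 : ‖y‖ ≥ 2, and y not on sphere, so ‖y‖ > 2
      have h2 : (2:ℝ) ≤ ‖y‖ := by
        simpa [mem_ball, dist_eq_norm] using hy2
      have hne : ‖y‖ ≠ 2 := by
        intro hcon
        exact hy (by simp [mem_sphere_iff_norm, hcon])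
      have : 2 < ‖y‖ := lt_of_le_of_ne h2 (Ne.symm hne)
      simp [hF, hχc2 y this]
    · have : y ∈ ball (0:E3) (3/2) := not_not.1 hy32
      simp [hF, hχc1 y this]
  rw [step1]
  -- step 2 : expand F into components
  have hdecomp : ∀ x : E3, ∑ i, x i • EuclideanSpace.single (𝕜 := ℝ) i (1:ℝ) = x := by
    intro x
    ext j
    rw [WithLp.ofLp_sum, Finset.sum_apply]
    simp [EuclideanSpace.single_apply]
  have hFeq : ∀ y, F y = ∑ i, (ψ y i) * fderiv ℝ χ y (EuclideanSpace.single i 1) := by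
    intro y
    show (fderiv ℝ χ y) (ψ y) = _
    conv_lhs => rw [← hdecomp (ψ y)]
    rw [map_sum]
    simp [smul_eq_mul]
  -- continuity of fderiv χ applied to a vector
  have hχfC : ∀ v : E3, Continuous fun y => fderiv ℝ χ y v := by
    intro v
    exact (hχ.continuous_fderiv (by simp)).clm_apply continuous_const
  have hχC : Continuous χ := hχ.continuous
  have hχb : ∀ y, ‖χ y‖ ≤ 1 := by
    intro y
    rcases hrange y with ⟨h0, h1⟩
    rw [Real.norm_eq_abs, abs_le]; constructor <;> linarith
  -- integrability
  have hint1 : ∀ i : Fin 3,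
      Integrable (fun y => (ψ y i) * fderiv ℝ χ y (EuclideanSpace.single i 1)) volume := by
    intro i
    apply Continuous.integrable_of_hasCompactSupport
    · exact ((hψiC i).continuous).mul (hχfC _)
    · exact (hψis i).mul_right
  have hint2 : ∀ i : Fin 3,
      Integrable (fun y => fderiv ℝ (fun y => ψ y i) y (EuclideanSpace.single i 1) * χ y)
        volume := by
    intro i
    apply Continuous.integrable_of_hasCompactSupport
    · exact (((hψiC i).continuous_fderiv (by simp)).clm_apply continuous_const).mul hχC
    · exact (((hψis i).fderiv (𝕜 := ℝ)).comp_left (g := fun L : E3 →L[ℝ] ℝ =>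
        L (EuclideanSpace.single i 1)) rfl).mul_right
  have hint3 : ∀ i : Fin 3, Integrable (fun y => (ψ y i) * χ y) volume := by
    intro i
    apply Continuous.integrable_of_hasCompactSupport
    · exact ((hψiC i).continuous).mul hχC
    · exact (hψis i).mul_right
  -- integration by parts for each component
  have hibp : ∀ i : Fin 3,
      (∫ y, (ψ y i) * fderiv ℝ χ y (EuclideanSpace.single i 1)) =
        - ∫ y, fderiv ℝ (fun y => ψ y i) y (EuclideanSpace.single i 1) * χ y := by
    intro i
    exact integral_mul_fderiv_eq_neg_fderiv_mul_of_integrable (hint2 i) (hint1 i)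
      (hint3 i) (fun x _ => (hψiC i).differentiable (by simp) x) (fun x _ => hχd x)
  calc (∫ y, F y) = ∫ y, ∑ i, (ψ y i) * fderiv ℝ χ y (EuclideanSpace.single i 1) := by
        simp_rw [hFeq]
    _ = ∑ i, ∫ y, (ψ y i) * fderiv ℝ χ y (EuclideanSpace.single i 1) :=
        integral_finset_sum _ (fun i _ => hint1 i)
    _ = ∑ i, - ∫ y, fderiv ℝ (fun y => ψ y i) y (EuclideanSpace.single i 1) * χ y := by
        simp_rw [hibp]
    _ = - ∫ y, ∑ i, fderiv ℝ (fun y => ψ y i) y (EuclideanSpace.single i 1) * χ y := by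
        rw [Finset.sum_neg_distrib, ← integral_finset_sum _ (fun i _ => hint2 i)]
    _ = 0 := by
        have : ∀ y : E3,
            ∑ i, fderiv ℝ (fun y => ψ y i) y (EuclideanSpace.single i 1) * χ y = 0 := by
          intro y
          have : ∀ i : Fin 3,
              fderiv ℝ (fun y => ψ y i) y (EuclideanSpace.single i 1) =
                ε * fderiv ℝ φ (a y) (EuclideanSpace.single i 1) i := by
            intro i
            rw [hfψi i y]
            simp [EuclideanSpace.proj]
          simp_rw [this]
          rw [← Finset.sum_mul]
          have := hdiv (a y)
          rw [← Finset.mul_sum, this]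
          ring
        simp [this]
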